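/- arXiv:2011.14260 — 4 statements merged into one kernel-verified Lean document; each statement's English description precedes it below -/
import Mathlib

section
/- Weighted quiver mutation preserves integrality outside the frozen block: let I be a finite set, d = (d_i)_{i∈I} a family of positive integers, σ = (σ_{ij})_{i,j∈I} a skew-symmetric matrix with rational entries, and i, j, k ∈ I with i ≠ k and j ≠ k. If σ_{ij}, σ_{ik} and σ_{kj} are all integers, then (μ_k(σ))_{ij} is an integer. In particular, for positive integers d_i, d_j, d_k the quantity α^k_{ij} = d_k·gcd(d_i,d_j)/(gcd(d_k,d_i)·gcd(d_k,d_j)) is a positive integer. -/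
/-- The factor `α^k_{ij} = d_k·gcd(d_i,d_j)/(gcd(d_k,d_i)·gcd(d_k,d_j))` appearing in
weighted quiver mutation. -/
noncomputable def alphaFac {I : Type*} (d : I → ℕ) (k i j : I) : ℚ :=
  ((d k : ℚ) * (Nat.gcd (d i) (d j) : ℚ)) /
    ((Nat.gcd (d k) (d i) : ℚ) * (Nat.gcd (d k) (d j) : ℚ))

/-- Weighted quiver mutation at a vertex `k`. -/
noncomputable def wqMut {I : Type*} [DecidableEq I] (d : I → ℕ) (σ : I → I → ℚ) (k : I) :
    I → I → ℚ :=
  fun i j =>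
    if i = k ∨ j = k then -σ i j
    else σ i j + ((|σ i k| * σ k j + σ i k * |σ k j|) / 2) * alphaFac d k i j

lemma alpha_dvd (a b c : ℕ) : Nat.gcd c a * Nat.gcd c b ∣ c * Nat.gcd a b := by
  rw [← Nat.gcd_mul_lcm (Nat.gcd c a) (Nat.gcd c b), mul_comm c (Nat.gcd a b)]
  exact Nat.mul_dvd_mul
    (Nat.dvd_gcd ((Nat.gcd_dvd_left _ _).trans (Nat.gcd_dvd_right c a))
      ((Nat.gcd_dvd_right _ _).trans (Nat.gcd_dvd_right c b)))
    (Nat.lcm_dvd (Nat.gcd_dvd_left c a) (Nat.gcd_dvd_left c b))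

/-- Weighted quiver mutation preserves integrality outside the frozen block, and the
factor `α^k_{ij}` is a positive integer. -/
theorem weighted_quiver_mutation_integrality {I : Type*} [Fintype I] [DecidableEq I]
    (d : I → ℕ) (hd : ∀ i, 0 < d i)
    (σ : I → I → ℚ) (hσ : ∀ i j, σ j i = -σ i j) (i j k : I)
    (hik : i ≠ k) (hjk : j ≠ k)
    (hij : ∃ a : ℤ, σ i j = a) (hik' : ∃ a : ℤ, σ i k = a) (hkj : ∃ a : ℤ, σ k j = a) :
    (∃ a : ℤ, wqMut d σ k i j = a) ∧ ∃ a : ℕ, 0 < a ∧ alphaFac d k i j = a := by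
  -- divisibility for alpha
  set g1 := Nat.gcd (d k) (d i) with hg1
  set g2 := Nat.gcd (d k) (d j) with hg2
  have hdvd : g1 * g2 ∣ d k * Nat.gcd (d i) (d j) := alpha_dvd (d i) (d j) (d k)
  obtain ⟨N, hN⟩ := hdvd
  have hg1pos : 0 < g1 := Nat.gcd_pos_of_pos_left _ (hd k)
  have hg2pos : 0 < g2 := Nat.gcd_pos_of_pos_left _ (hd k)
  have hNpos : 0 < N := by
    have h0 : 0 < d k * Nat.gcd (d i) (d j) :=
      Nat.mul_pos (hd k) (Nat.gcd_pos_of_pos_left _ (hd i))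
    rw [hN] at h0
    exact Nat.pos_of_mul_pos_left (by rwa [mul_comm] at h0)
  have halpha : alphaFac d k i j = (N : ℚ) := by
    rw [alphaFac]
    have h1 : (g1 : ℚ) ≠ 0 := by exact_mod_cast hg1pos.ne'
    have h2 : (g2 : ℚ) ≠ 0 := by exact_mod_cast hg2pos.ne'
    field_simp
    rw [div_eq_iff (by exact_mod_cast (Nat.mul_pos hg1pos hg2pos).ne')]
    exact_mod_cast hN.trans (mul_comm _ _)
  refine ⟨?_, N, hNpos, halpha⟩
  obtain ⟨x, hx⟩ := hij
  obtain ⟨y, hy⟩ := hik'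
  obtain ⟨z, hz⟩ := hkj
  -- the half term is an integer m
  obtain ⟨m, hm⟩ : ∃ m : ℤ, (|σ i k| * σ k j + σ i k * |σ k j|) / 2 = (m : ℚ) := by
    rcases abs_cases (σ i k) with ⟨hy', _⟩ | ⟨hy', _⟩ <;>
      rcases abs_cases (σ k j) with ⟨hz', _⟩ | ⟨hz', _⟩
    · exact ⟨y * z, by rw [hy', hz', hy, hz]; push_cast; ring⟩
    · exact ⟨0, by rw [hy', hz']; push_cast; ring⟩
    · exact ⟨0, by rw [hy', hz']; push_cast; ring⟩
    · exact ⟨-(y * z), by rw [hy', hz', hy, hz]; push_cast; ring⟩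
  refine ⟨x + m * N, ?_⟩
  rw [wqMut]
  simp only [hik, hjk, or_self, if_false]
  rw [hm, halpha, hx]
  push_cast
  ring
end

section
/- Seed mutations are involutive on cluster Poisson variables: let K be a field, I a finite set, ε = (ε_{ij})_{i,j∈I} an integer matrix, k ∈ I, and X = (X_i)_{i∈I} a family of elements of K with X_k ≠ 0 and 1 + X_k ≠ 0. Let X' := μ_k^{ε}(X) be the cluster Poisson transformation of X at k with respect to ε, and let X'' := μ_k^{μ_k(ε)}(X') be the cluster Poisson transformation of X' at k with respect to the mutated matrix μ_k(ε). Then X''_i = X_i for all i ∈ I. -/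
/-- Matrix mutation of an integer matrix at a vertex `k`. -/
def matMutZ {I : Type*} [DecidableEq I] (ε : I → I → ℤ) (k : I) : I → I → ℤ :=
  fun i j =>
    if i = k ∨ j = k then -ε i j
    else ε i j + (|ε i k| * ε k j + ε i k * |ε k j|) / 2

/-- The cluster Poisson transformation at a vertex `k` with respect to an integer
matrix `ε`: `X'_k = X_k⁻¹` and `X'_i = X_i·(1 + X_k^{−sgn(ε_{ik})})^{−ε_{ik}}` for `i ≠ k`. -/
noncomputable def clusterPoissonMut {I : Type*} [DecidableEq I] {K : Type*} [Field K]
    (ε : I → I → ℤ) (k : I) (X : I → K) : I → K :=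
  fun i =>
    if i = k then (X k)⁻¹
    else X i * (1 + X k ^ (-(ε i k).sign)) ^ (-(ε i k))

/-- Seed mutations are involutive on cluster Poisson variables. -/
theorem cluster_poisson_mutation_involutive {I : Type*} [Fintype I] [DecidableEq I]
    {K : Type*} [Field K] (ε : I → I → ℤ) (k : I) (X : I → K)
    (hXk : X k ≠ 0) (hXk' : 1 + X k ≠ 0) :
    ∀ i, clusterPoissonMut (matMutZ ε k) k (clusterPoissonMut ε k X) i = X i := by
  intro i
  by_cases hik : i = k
  · subst hik
    simp [clusterPoissonMut]
  · by_cases he : ε i k = 0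
    · simp [clusterPoissonMut, matMutZ, hik, he]
    · have hb : (1 + X k ^ (-(ε i k).sign)) ≠ 0 := by
        rcases lt_trichotomy (ε i k) 0 with h | h | h
        · rw [Int.sign_eq_neg_one_of_neg h]
          simpa using hXk'
        · exact absurd h he
        · rw [Int.sign_eq_one_of_pos h]
          simp only [zpow_neg, zpow_one]
          intro hc
          apply hXk'
          have h2 : X k * (1 + (X k)⁻¹) = 1 + X k := by
            field_simp
            ring
          rw [hc, mul_zero] at h2
          exact h2.symm
      simp only [clusterPoissonMut, matMutZ, if_neg hik, or_true, if_pos, if_pos rfl,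
        Int.sign_neg, neg_neg]
      rw [inv_zpow', mul_assoc, ← zpow_add₀ hb]
      simp
end

section
/- The Dynkin involution ∗ (type A instance): fix n ≥ 2 and let J be the n×n complex matrix with J_{i, n+1−i} = (−1)^{i−1} for 1 ≤ i ≤ n and all other entries 0. For g ∈ GL_n(ℂ) define g∗ := J·(g^{-1})^T·J^{-1}. Then: (i) the map g ↦ g∗ is a group homomorphism, i.e. (gh)∗ = g∗·h∗ for all g, h ∈ GL_n(ℂ); (ii) it is an involution, i.e. (g∗)∗ = g for all g ∈ GL_n(ℂ); (iii) for all 1 ≤ s ≤ n−1 and t ∈ ℂ, x_s(t)∗ = x_{n−s}(t) and y_s(t)∗ = y_{n−s}(t). -/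
open Matrix

/-- The one-parameter root subgroup element `x_s(t) = 1 + t·E_{s,s+1}` (type `A_m`,
`0`-indexed simple root label `s : Fin m`, matrices of size `m+1`). -/
noncomputable def xgen (m : ℕ) (s : Fin m) (t : ℂ) : Matrix (Fin (m + 1)) (Fin (m + 1)) ℂ :=
  1 + Matrix.single s.castSucc s.succ t

/-- The one-parameter root subgroup element `y_s(t) = 1 + t·E_{s+1,s}`. -/
noncomputable def ygen (m : ℕ) (s : Fin m) (t : ℂ) : Matrix (Fin (m + 1)) (Fin (m + 1)) ℂ :=
  1 + Matrix.single s.succ s.castSucc t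

/-- The lift `w̄₀` of the longest Weyl group element: the matrix `J` with
`J_{i, n+1−i} = (−1)^{i−1}` (here written `0`-indexed: `J_{i,j} = (−1)^i` if `i+j = m`). -/
noncomputable def Jmat (m : ℕ) : Matrix (Fin (m + 1)) (Fin (m + 1)) ℂ :=
  Matrix.of fun i j => if (i : ℕ) + (j : ℕ) = m then (-1 : ℂ) ^ (i : ℕ) else 0

/-- The Dynkin involution `g∗ := J·(g⁻¹)ᵀ·J⁻¹` in type `A_m`. -/
noncomputable def astar (m : ℕ) (g : Matrix (Fin (m + 1)) (Fin (m + 1)) ℂ) :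
    Matrix (Fin (m + 1)) (Fin (m + 1)) ℂ :=
  Jmat m * (g⁻¹)ᵀ * (Jmat m)⁻¹

/- ---------------- auxiliary lemmas ---------------- -/

lemma negpow_congr {p q : ℕ} (h : p % 2 = q % 2) : (-1 : ℂ) ^ p = (-1 : ℂ) ^ q := by
  rcases Nat.even_or_odd p with hp | hp
  · have hp2 := Nat.even_iff.1 hp
    rw [hp.neg_one_pow, (Nat.even_iff.2 (by omega)).neg_one_pow]
  · have hp2 := Nat.odd_iff.1 hp
    rw [hp.neg_one_pow, (Nat.odd_iff.2 (by omega)).neg_one_pow]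

lemma negpow_sq (m : ℕ) : (-1 : ℂ) ^ m * (-1 : ℂ) ^ m = 1 := by
  rw [← pow_add]
  exact (Even.add_self m).neg_one_pow

lemma revcond (m : ℕ) (i k : Fin (m + 1)) : (i : ℕ) + (k : ℕ) = m ↔ k = i.rev := by
  rw [Fin.ext_iff, Fin.val_rev]
  omega

lemma Jmat_apply (m : ℕ) (i j : Fin (m + 1)) :
    Jmat m i j = if j = i.rev then (-1 : ℂ) ^ (i : ℕ) else 0 := by
  simp only [Jmat, of_apply, revcond]

lemma rev_add (m : ℕ) (i : Fin (m + 1)) : ((i.rev : ℕ)) + (i : ℕ) = m := by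
  have := Fin.val_rev i; omega

lemma Jmul (m : ℕ) (A : Matrix (Fin (m + 1)) (Fin (m + 1)) ℂ) (i j : Fin (m + 1)) :
    (Jmat m * A) i j = (-1) ^ (i : ℕ) * A i.rev j := by
  rw [mul_apply, Finset.sum_eq_single i.rev]
  · rw [Jmat_apply, if_pos rfl]
  · intro k _ hk
    rw [Jmat_apply, if_neg hk, zero_mul]
  · simp

lemma mulJ (m : ℕ) (A : Matrix (Fin (m + 1)) (Fin (m + 1)) ℂ) (i j : Fin (m + 1)) :
    (A * Jmat m) i j = A i j.rev * (-1) ^ ((j.rev : ℕ)) := by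
  rw [mul_apply, Finset.sum_eq_single j.rev]
  · rw [Jmat_apply, if_pos (Fin.rev_rev j).symm]
  · intro k _ hk
    rw [Jmat_apply, if_neg, mul_zero]
    intro h; apply hk; rw [h, Fin.rev_rev]
  · simp

lemma JJ (m : ℕ) : Jmat m * Jmat m = ((-1 : ℂ) ^ m) • 1 := by
  ext i j
  rw [Jmul, Jmat_apply]
  rcases eq_or_ne j i with rfl | hji
  · rw [if_pos (Fin.rev_rev j).symm]
    simp only [Matrix.smul_apply, one_apply_eq, smul_eq_mul, mul_one, ← pow_add]
    exact negpow_congr (by have := rev_add m j; omega)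
  · rw [if_neg, mul_zero]
    · simp [one_apply_ne hji.symm, hji]
    · intro h; apply hji; rw [h, Fin.rev_rev]

lemma J_mul_smulJ (m : ℕ) : Jmat m * (((-1 : ℂ) ^ m) • Jmat m) = 1 := by
  rw [mul_smul_comm, JJ, smul_smul, negpow_sq, one_smul]

lemma Jinv (m : ℕ) : (Jmat m)⁻¹ = ((-1 : ℂ) ^ m) • Jmat m :=
  inv_eq_right_inv (J_mul_smulJ m)

lemma Jdet (m : ℕ) : IsUnit (Jmat m).det :=
  Matrix.isUnit_det_of_right_inverse (J_mul_smulJ m)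

lemma JT (m : ℕ) : (Jmat m)ᵀ = ((-1 : ℂ) ^ m) • Jmat m := by
  ext i j
  rw [transpose_apply, Matrix.smul_apply, Jmat_apply, Jmat_apply, smul_eq_mul]
  rcases eq_or_ne j i.rev with rfl | hji
  · rw [if_pos (Fin.rev_rev i).symm, if_pos rfl, ← pow_add]
    exact negpow_congr (by have := rev_add m i; omega)
  · rw [if_neg, if_neg hji, mul_zero]
    intro h; apply hji; rw [h, Fin.rev_rev]

lemma conjJ (m : ℕ) (a b : Fin (m + 1)) (t : ℂ) :
    Jmat m * Matrix.single a b t * (Jmat m)⁻¹ =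
      Matrix.single a.rev b.rev (((-1 : ℂ) ^ ((a : ℕ) + (b : ℕ))) * t) := by
  rw [Jinv, mul_smul_comm]
  ext i j
  rw [Matrix.smul_apply, mulJ, Jmul, smul_eq_mul]
  simp only [Matrix.single, of_apply]
  by_cases h : a.rev = i ∧ b.rev = j
  · have h1 : a = i.rev := by rw [← h.1, Fin.rev_rev]
    have h2 : b = j.rev := by rw [← h.2, Fin.rev_rev]
    rw [if_pos ⟨h1, h2⟩, if_pos h]
    have e1 : (i : ℕ) = ((a.rev : ℕ)) := by rw [h.1]
    have e2 : ((j.rev : ℕ)) = (b : ℕ) := by rw [h2]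
    rw [e1, e2]
    have : (-1 : ℂ) ^ m * ((-1 : ℂ) ^ ((a.rev : ℕ)) * t * (-1 : ℂ) ^ (b : ℕ)) =
        ((-1 : ℂ) ^ m * (-1 : ℂ) ^ ((a.rev : ℕ)) * (-1 : ℂ) ^ (b : ℕ)) * t := by ring
    rw [this, ← pow_add, ← pow_add]
    congr 1
    exact negpow_congr (by have := rev_add m a; omega)
  · have hc : ¬ (a = i.rev ∧ b = j.rev) := by
      intro hc
      exact h ⟨by rw [hc.1, Fin.rev_rev], by rw [hc.2, Fin.rev_rev]⟩
    rw [if_neg hc, if_neg h]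
    ring

lemma transpose_stdBasis (m : ℕ) (a b : Fin (m + 1)) (t : ℂ) :
    (Matrix.single a b t)ᵀ = Matrix.single b a t := by
  ext i j
  simp only [transpose_apply, Matrix.single, of_apply, and_comm]

lemma inv_one_add_std (m : ℕ) (a b : Fin (m + 1)) (hab : b ≠ a) (t : ℂ) :
    (1 + Matrix.single a b t)⁻¹ = 1 - Matrix.single a b t := by
  apply inv_eq_right_inv
  rw [mul_sub, mul_one, add_mul, one_mul,
    (Matrix.single_mul_single_of_ne t a b a hab t : Matrix.single a b t * Matrix.single a b t = 0)]
  abel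

lemma astar_one_add (m : ℕ) (a b : Fin (m + 1)) (hab : b ≠ a) (t : ℂ) :
    astar m (1 + Matrix.single a b t) =
      1 + Matrix.single b.rev a.rev (-(((-1 : ℂ) ^ ((b : ℕ) + (a : ℕ))) * t)) := by
  rw [astar, inv_one_add_std m a b hab, transpose_sub, transpose_one, transpose_stdBasis,
    Matrix.mul_sub, Matrix.mul_one, Matrix.sub_mul, Matrix.mul_nonsing_inv _ (Jdet m), conjJ]
  rw [sub_eq_add_neg]
  congr 1
  ext i j
  simp only [Matrix.single, Matrix.neg_apply, of_apply]
  rw [apply_ite Neg.neg, neg_zero]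

/-- The Dynkin involution `∗` in type A: it is a group homomorphism on `GL_n(ℂ)`, an
involution, and sends `x_s(t)` to `x_{n−s}(t)` and `y_s(t)` to `y_{n−s}(t)`
(in `0`-indexed notation, `n−s` is `Fin.rev s`). -/
theorem dynkin_involution_typeA (m : ℕ) (hm : 1 ≤ m) :
    (∀ g h : Matrix (Fin (m + 1)) (Fin (m + 1)) ℂ, IsUnit g → IsUnit h →
        astar m (g * h) = astar m g * astar m h) ∧
    (∀ g : Matrix (Fin (m + 1)) (Fin (m + 1)) ℂ, IsUnit g → astar m (astar m g) = g) ∧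
    (∀ (s : Fin m) (t : ℂ),
        astar m (xgen m s t) = xgen m s.rev t ∧ astar m (ygen m s t) = ygen m s.rev t) := by
  refine ⟨?_, ?_, ?_⟩
  · intro g h _ _
    have h1 : (Jmat m)⁻¹ * Jmat m = 1 := Matrix.nonsing_inv_mul _ (Jdet m)
    have h2 : astar m g * astar m h =
        Jmat m * ((g⁻¹)ᵀ * (((Jmat m)⁻¹ * Jmat m) * ((h⁻¹)ᵀ * (Jmat m)⁻¹))) := by
      simp only [astar, Matrix.mul_assoc]
    rw [h2, h1, Matrix.one_mul]
    simp only [astar, Matrix.mul_inv_rev, transpose_mul, Matrix.mul_assoc]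
  · intro g hg
    have hgd : IsUnit g.det := (Matrix.isUnit_iff_isUnit_det g).1 hg
    have hinner : (astar m g)⁻¹ = Jmat m * gᵀ * (Jmat m)⁻¹ := by
      rw [astar, Matrix.mul_inv_rev, Matrix.mul_inv_rev,
        Matrix.nonsing_inv_nonsing_inv _ (Jdet m), ← transpose_nonsing_inv,
        Matrix.nonsing_inv_nonsing_inv _ hgd, Matrix.mul_assoc]
    have hstep : astar m (astar m g) =
        (Jmat m * ((Jmat m)⁻¹)ᵀ) * g * ((Jmat m)ᵀ * (Jmat m)⁻¹) := by
      rw [astar, hinner, transpose_mul, transpose_mul, transpose_transpose]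
      simp only [Matrix.mul_assoc]
    have hA : Jmat m * ((Jmat m)⁻¹)ᵀ = ((-1 : ℂ) ^ m) • 1 := by
      rw [Jinv, transpose_smul, JT, smul_smul, negpow_sq, one_smul, JJ]
    have hB : (Jmat m)ᵀ * (Jmat m)⁻¹ = ((-1 : ℂ) ^ m) • 1 := by
      rw [Jinv, JT, smul_mul_assoc, mul_smul_comm, JJ, smul_smul, smul_smul, negpow_sq, one_mul]
    rw [hstep, hA, hB, smul_mul_assoc, Matrix.one_mul, mul_smul_comm, Matrix.mul_one,
      smul_smul, negpow_sq, one_smul]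
  · intro s t
    have hne1 : s.succ ≠ s.castSucc := by
      intro h
      have := Fin.ext_iff.1 h
      simp only [Fin.val_succ, Fin.coe_castSucc] at this
      omega
    have hne2 : s.castSucc ≠ s.succ := hne1.symm
    have hsign1 : -(((-1 : ℂ) ^ (((s.succ : Fin (m+1)) : ℕ) + ((s.castSucc : Fin (m+1)) : ℕ))) * t) = t := by
      have : (-1 : ℂ) ^ (((s.succ : Fin (m+1)) : ℕ) + ((s.castSucc : Fin (m+1)) : ℕ)) = -1 := by
        have h : ((s.succ : Fin (m+1)) : ℕ) + ((s.castSucc : Fin (m+1)) : ℕ) = 2 * (s : ℕ) + 1 := by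
          simp only [Fin.val_succ, Fin.coe_castSucc]
          omega
        rw [h]
        exact Odd.neg_one_pow ⟨(s : ℕ), by omega⟩
      rw [this]; ring
    have hsign2 : -(((-1 : ℂ) ^ (((s.castSucc : Fin (m+1)) : ℕ) + ((s.succ : Fin (m+1)) : ℕ))) * t) = t := by
      have : (-1 : ℂ) ^ (((s.castSucc : Fin (m+1)) : ℕ) + ((s.succ : Fin (m+1)) : ℕ)) = -1 := by
        have h : ((s.castSucc : Fin (m+1)) : ℕ) + ((s.succ : Fin (m+1)) : ℕ) = 2 * (s : ℕ) + 1 := by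
          simp only [Fin.val_succ, Fin.coe_castSucc]
          omega
        rw [h]
        exact Odd.neg_one_pow ⟨(s : ℕ), by omega⟩
      rw [this]; ring
    constructor
    · rw [xgen, astar_one_add m _ _ hne1, Fin.rev_succ, Fin.rev_castSucc, hsign1, xgen]
    · rw [ygen, astar_one_add m _ _ hne2, Fin.rev_castSucc, Fin.rev_succ, hsign2, ygen]
end

section
/- Inversion–conjugation of evaluation maps (type A instance of the corollary relating ev⁺_𝐬 and ev⁻_{𝐬ᵒᵖ∗}): fix n ≥ 2, let 𝐬 = (s_1, …, s_N) be any word with letters in {1, …, n−1}, let a_1, …, a_{n−1} and b_1, …, b_N be nonzero complex numbers, and set ev⁺ := H^1(a_1)·H^2(a_2)⋯H^{n−1}(a_{n−1})·(𝔼^{s_1}H^{s_1}(b_1))·(𝔼^{s_2}H^{s_2}(b_2))⋯(𝔼^{s_N}H^{s_N}(b_N)). For s ∈ {1,…,n−1} let m_s be the number of k with s_k = s and let k(s,i) be the position of the i-th occurrence of s in 𝐬; define x_{(s,0)} := a_s and x_{(s,i)} := b_{k(s,i)} for 1 ≤ i ≤ m_s. Let 𝐬ᵒᵖ∗ := (n−s_N,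 …, n−s_1), and define a'_u := x_{(n−u, m_{n−u})} for u ∈ {1,…,n−1}, and for each position j ∈ {1,…,N} of 𝐬ᵒᵖ∗, whose letter u_j := n−s_{N+1−j} occurs there for the i_j-th time (counting from the left in 𝐬ᵒᵖ∗), define b'_j := x_{(n−u_j, m_{n−u_j} − i_j)}. Then J^{-1}·(ev⁺)^{-1}·J = c·ev⁻, where c := (a_1⋯a_{n−1}·b_1⋯b_N)^{-1} and ev⁻ := H^1(a'_1)⋯H^{n−1}(a'_{n−1})·(𝔽^{u_1}H^{u_1}(b'_1))⋯(𝔽^{u_N}H^{u_N}(b'_N)). -/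
open Matrix

/-- `H^s(a)`: the diagonal matrix whose entries `i ≤ s` (0-indexed) equal `a` and whose
remaining entries equal `1`. -/
noncomputable def Hgen (m : ℕ) (s : Fin m) (a : ℂ) : Matrix (Fin (m + 1)) (Fin (m + 1)) ℂ :=
  Matrix.diagonal fun i => if (i : ℕ) ≤ (s : ℕ) then a else 1

/-- The set of positions at which the letter `s0` occurs in the word `s`. -/
def occ {N m : ℕ} (s : Fin N → Fin m) (s0 : Fin m) : Finset (Fin N) :=
  Finset.univ.filter fun k => s k = s0

/-- The coweight parameter `x_{(s0,i)}`: `x_{(s0,0)} = a_{s0}`, and for `1 ≤ i ≤ m_{s0}`,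
`x_{(s0,i)} = b_{k(s0,i)}` where `k(s0,i)` is the position of the `i`-th occurrence of the
letter `s0` in the word `s` (counted from the left). -/
noncomputable def param {N m : ℕ} (s : Fin N → Fin m) (a : Fin m → ℂ) (b : Fin N → ℂ)
    (s0 : Fin m) (i : ℕ) : ℂ :=
  if h : 0 < i ∧ i ≤ (occ s s0).card then
    b (((occ s s0).orderIsoOfFin rfl ⟨i - 1, by omega⟩ : Fin N))
  else a s0

/-- The evaluation map
`ev⁺ = H^1(a_1)⋯H^{n−1}(a_{n−1})·(𝔼^{s_1}H^{s_1}(b_1))⋯(𝔼^{s_N}H^{s_N}(b_N))`. -/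
noncomputable def evPlus {N m : ℕ} (s : Fin N → Fin m) (a : Fin m → ℂ) (b : Fin N → ℂ) :
    Matrix (Fin (m + 1)) (Fin (m + 1)) ℂ :=
  (List.ofFn fun u : Fin m => Hgen m u (a u)).prod *
    (List.ofFn fun k : Fin N => xgen m (s k) 1 * Hgen m (s k) (b k)).prod

/-- The word `𝐬ᵒᵖ∗ = (n−s_N, …, n−s_1)` (0-indexed: `j ↦ rev (s (rev j))`). -/
def sop {N m : ℕ} (s : Fin N → Fin m) : Fin N → Fin m := fun j => (s j.rev).rev

/-- The number `i_j` of occurrences of the letter `w j` among the first `j` letters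
(inclusive) of the word `w`, i.e. the occurrence count of the letter at position `j`,
counting from the left. -/
def occIdx {N m : ℕ} (w : Fin N → Fin m) (j : Fin N) : ℕ :=
  (Finset.univ.filter fun j' => j' ≤ j ∧ w j' = w j).card

/-- `a'_u := x_{(n−u, m_{n−u})}`. -/
noncomputable def aPrime {N m : ℕ} (s : Fin N → Fin m) (a : Fin m → ℂ) (b : Fin N → ℂ)
    (u : Fin m) : ℂ :=
  param s a b u.rev (occ s u.rev).card

/-- `b'_j := x_{(n−u_j, m_{n−u_j} − i_j)}`, where `u_j` is the letter of `𝐬ᵒᵖ∗` at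
position `j` and `i_j` its occurrence count there. -/
noncomputable def bPrime {N m : ℕ} (s : Fin N → Fin m) (a : Fin m → ℂ) (b : Fin N → ℂ)
    (j : Fin N) : ℂ :=
  param s a b (sop s j).rev ((occ s (sop s j).rev).card - occIdx (sop s) j)

/-- The evaluation map
`ev⁻ = H^1(a'_1)⋯H^{n−1}(a'_{n−1})·(𝔽^{u_1}H^{u_1}(b'_1))⋯(𝔽^{u_N}H^{u_N}(b'_N))`. -/
noncomputable def evMinus {N m : ℕ} (s : Fin N → Fin m) (a : Fin m → ℂ) (b : Fin N → ℂ) :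
    Matrix (Fin (m + 1)) (Fin (m + 1)) ℂ :=
  (List.ofFn fun u : Fin m => Hgen m u (aPrime s a b u)).prod *
    (List.ofFn fun j : Fin N => ygen m (sop s j) 1 * Hgen m (sop s j) (bPrime s a b j)).prod

lemma HJH (m : ℕ) (v : Fin m) (t : ℂ) :
    Hgen m v t * Jmat m * Hgen m v.rev t = t • Jmat m := by
  ext i j
  simp only [Hgen, Matrix.diagonal_mul, Matrix.mul_diagonal, Matrix.smul_apply, Jmat,
    Matrix.of_apply, smul_eq_mul, Fin.val_rev]
  by_cases h : (i:ℕ) + (j:ℕ) = m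
  · have hv := v.isLt; have hi := i.isLt; have hj := j.isLt
    simp only [h, if_true]
    by_cases hiv : (i:ℕ) ≤ (v:ℕ)
    · rw [if_pos hiv, if_neg (by omega : ¬ (j:ℕ) ≤ m - ((v:ℕ)+1))]; ring
    · rw [if_neg hiv, if_pos (by omega)]; ring
  · simp [h]
lemma EJ_eq (m : ℕ) (v : Fin m) :
    Matrix.single v.castSucc v.succ (1:ℂ) * Jmat m
      = -(Jmat m * Matrix.single (v.rev).succ (v.rev).castSucc (1:ℂ)) := by
  have hv := v.isLt
  ext i j
  rw [Matrix.neg_apply]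
  by_cases hi : i = v.castSucc
  · subst hi
    rw [Matrix.single_mul_apply_same]
    by_cases hj : j = (v.rev).castSucc
    · subst hj
      rw [Matrix.mul_single_apply_same]
      simp only [Jmat, Matrix.of_apply, Fin.coe_castSucc, Fin.val_succ, Fin.val_rev]
      rw [if_pos (by omega), if_pos (by omega), pow_succ]
      ring
    · rw [Matrix.mul_single_apply_of_ne (hbj := hj)]
      have hc : ¬ ((v.succ : ℕ) + (j:ℕ) = m) := by
        intro hc
        apply hj
        have hjv : (j:ℕ) = m - ((v:ℕ)+1) := by simp at hc; omega
        ext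
        simp [Fin.val_rev, hjv]
      simp only [Jmat, Matrix.of_apply, one_mul, neg_zero]
      rw [if_neg (by simpa using hc)]
  · rw [Matrix.single_mul_apply_of_ne (h := hi)]
    by_cases hj : j = (v.rev).castSucc
    · subst hj
      rw [Matrix.mul_single_apply_same]
      have hc : ¬ ((i:ℕ) + ((v.rev).succ : ℕ) = m) := by
        intro hc
        apply hi
        have : (i:ℕ) = (v:ℕ) := by simp [Fin.val_rev] at hc; omega
        ext; simpa using this
      simp only [Jmat, Matrix.of_apply, mul_one]
      rw [if_neg (by simpa using hc), neg_zero]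
    · rw [Matrix.mul_single_apply_of_ne (hbj := hj), neg_zero]
lemma EJE_eq (m : ℕ) (v : Fin m) :
    Matrix.single v.castSucc v.succ (1:ℂ) * Jmat m *
      Matrix.single (v.rev).succ (v.rev).castSucc (1:ℂ) = 0 := by
  have hv := v.isLt
  rw [Matrix.mul_assoc]
  ext i j
  rw [Matrix.zero_apply]
  by_cases hi : i = v.castSucc
  · subst hi
    rw [Matrix.single_mul_apply_same]
    by_cases hj : j = (v.rev).castSucc
    · subst hj
      rw [Matrix.mul_single_apply_same]
      have hc : ¬ ((v.succ : ℕ) + ((v.rev).succ : ℕ) = m) := by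
        simp [Fin.val_rev]; omega
      simp only [Jmat, Matrix.of_apply]
      rw [if_neg (by simpa using hc)]
      ring
    · rw [Matrix.mul_single_apply_of_ne (hbj := hj), mul_zero]
  · rw [Matrix.single_mul_apply_of_ne (h := hi)]
lemma XJY (m : ℕ) (v : Fin m) :
    xgen m v 1 * Jmat m * ygen m v.rev 1 = Jmat m := by
  unfold xgen ygen
  have expand : (1 + Matrix.single v.castSucc v.succ (1:ℂ)) * Jmat m *
      (1 + Matrix.single (v.rev).succ (v.rev).castSucc (1:ℂ))
      = Jmat m + Matrix.single v.castSucc v.succ (1:ℂ) * Jmat m +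
        (Jmat m * Matrix.single (v.rev).succ (v.rev).castSucc (1:ℂ) +
          Matrix.single v.castSucc v.succ (1:ℂ) * Jmat m *
            Matrix.single (v.rev).succ (v.rev).castSucc (1:ℂ)) := by
    noncomm_ring
  rw [expand, EJE_eq, EJ_eq]
  abel
lemma diag_mul_E {n : ℕ} (d : Fin n → ℂ) (i j : Fin n) (c : ℂ) :
    Matrix.diagonal d * Matrix.single i j c = Matrix.single i j (d i * c) := by
  ext a b
  by_cases ha : a = i
  · subst ha
    by_cases hb : b = j
    · subst hb
      rw [Matrix.diagonal_mul, Matrix.single_apply_same, Matrix.single_apply_same]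
    · rw [Matrix.diagonal_mul, Matrix.single_apply_of_col_ne _ _ (Ne.symm hb),
        Matrix.single_apply_of_col_ne _ _ (Ne.symm hb), mul_zero]
  · rw [Matrix.diagonal_mul, Matrix.single_apply_of_row_ne (Ne.symm ha),
      Matrix.single_apply_of_row_ne (Ne.symm ha), mul_zero]
lemma E_mul_diag {n : ℕ} (d : Fin n → ℂ) (i j : Fin n) (c : ℂ) :
    Matrix.single i j c * Matrix.diagonal d = Matrix.single i j (c * d j) := by
  ext a b
  by_cases hb : b = j
  · subst hb
    by_cases ha : a = i
    · subst ha
      rw [Matrix.mul_diagonal, Matrix.single_apply_same, Matrix.single_apply_same]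
    · rw [Matrix.mul_diagonal, Matrix.single_apply_of_row_ne (Ne.symm ha),
        Matrix.single_apply_of_row_ne (Ne.symm ha), zero_mul]
  · rw [Matrix.mul_diagonal, Matrix.single_apply_of_col_ne _ _ (Ne.symm hb),
      Matrix.single_apply_of_col_ne _ _ (Ne.symm hb), zero_mul]
noncomputable def dd (m : ℕ) (γ : Fin m → ℂ) : Fin (m + 1) → ℂ :=
  fun i => ∏ u : Fin m, if (i : ℕ) ≤ (u : ℕ) then γ u else 1
lemma diag_ofFn_prod {n : ℕ} : ∀ {k : ℕ} (g : Fin k → Fin n → ℂ),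
    (List.ofFn fun u => Matrix.diagonal (g u)).prod = Matrix.diagonal (fun i => ∏ u, g u i) := by
  intro k
  induction k with
  | zero => intro g; simp [List.ofFn_zero, Matrix.diagonal_one]
  | succ k ih =>
    intro g
    rw [List.ofFn_succ, List.prod_cons, ih (fun u => g u.succ), Matrix.diagonal_mul_diagonal]
    simp only [Fin.prod_univ_succ]
lemma Hgen_prod (m : ℕ) (γ : Fin m → ℂ) :
    (List.ofFn fun u : Fin m => Hgen m u (γ u)).prod = Matrix.diagonal (dd m γ) := by
  have := diag_ofFn_prod (n := m + 1) (k := m)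
    (fun (u : Fin m) (i : Fin (m+1)) => if (i : ℕ) ≤ (u : ℕ) then γ u else 1)
  simp only [Hgen] at this ⊢
  exact this
lemma dd_update_le (m : ℕ) (γ : Fin m → ℂ) (v : Fin m) (c : ℂ) (i : ℕ) (h : i ≤ (v:ℕ)) :
    (∏ u : Fin m, if i ≤ (u:ℕ) then Function.update γ v c u else 1)
      = c * ∏ u ∈ Finset.univ.erase v, (if i ≤ (u:ℕ) then γ u else 1) := by
  have hupd : (fun u : Fin m => if i ≤ (u:ℕ) then Function.update γ v c u else 1)
      = Function.update (fun u : Fin m => if i ≤ (u:ℕ) then γ u else 1) v c := by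
    funext u
    by_cases hu : u = v
    · subst hu; simp [h]
    · simp [Function.update_of_ne hu]
  rw [hupd, Finset.prod_update_of_mem (Finset.mem_univ v), Finset.sdiff_singleton_eq_erase]
lemma dd_plain_le (m : ℕ) (γ : Fin m → ℂ) (v : Fin m) (i : ℕ) (h : i ≤ (v:ℕ)) :
    (∏ u : Fin m, if i ≤ (u:ℕ) then γ u else 1)
      = γ v * ∏ u ∈ Finset.univ.erase v, (if i ≤ (u:ℕ) then γ u else 1) := by
  rw [← Finset.mul_prod_erase Finset.univ _ (Finset.mem_univ v), if_pos h]
lemma key1 (m : ℕ) (γ : Fin m → ℂ) (v : Fin m) (c : ℂ) (i : Fin (m+1)) :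
    (if (i:ℕ) ≤ (v:ℕ) then c else 1) * dd m γ i
      = dd m (Function.update γ v c) i * (if (i:ℕ) ≤ (v:ℕ) then γ v else 1) := by
  unfold dd
  by_cases h : (i:ℕ) ≤ (v:ℕ)
  · rw [if_pos h, if_pos h, dd_update_le m γ v c _ h, dd_plain_le m γ v _ h]
    ring
  · rw [if_neg h, if_neg h]
    have : (∏ u : Fin m, if (i:ℕ) ≤ (u:ℕ) then Function.update γ v c u else 1)
        = ∏ u : Fin m, if (i:ℕ) ≤ (u:ℕ) then γ u else 1 := by
      refine Finset.prod_congr rfl fun u _ => ?_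
      by_cases hu : (i:ℕ) ≤ (u:ℕ)
      · rw [if_pos hu, if_pos hu, Function.update_of_ne (by rintro rfl; omega)]
      · rw [if_neg hu, if_neg hu]
    rw [this]; ring
lemma key2 (m : ℕ) (γ : Fin m → ℂ) (v : Fin m) (c : ℂ) :
    dd m γ v.castSucc = dd m (Function.update γ v c) v.succ * γ v := by
  unfold dd
  simp only [Fin.coe_castSucc, Fin.val_succ]
  have h1 : (fun u : Fin m => if (v:ℕ) ≤ (u:ℕ) then γ u else 1)
      = Function.update (fun u : Fin m => if (v:ℕ)+1 ≤ (u:ℕ) then γ u else 1) v (γ v) := by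
    funext u
    by_cases hu : u = v
    · subst hu; simp
    · have : u ≠ v := hu
      rw [Function.update_of_ne hu]
      by_cases h2 : (v:ℕ) ≤ (u:ℕ)
      · rw [if_pos h2, if_pos (by
          rcases Nat.lt_or_ge (v:ℕ) (u:ℕ) with h3 | h3
          · omega
          · exfalso; exact hu (by ext; omega))]
      · rw [if_neg h2, if_neg (by omega)]
  have h2 : (∏ u : Fin m, if (v:ℕ)+1 ≤ (u:ℕ) then Function.update γ v c u else 1)
      = ∏ u : Fin m, if (v:ℕ)+1 ≤ (u:ℕ) then γ u else 1 := by
    refine Finset.prod_congr rfl fun u _ => ?_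
    by_cases hu : (v:ℕ)+1 ≤ (u:ℕ)
    · rw [if_pos hu, if_pos hu, Function.update_of_ne (by rintro rfl; omega)]
    · rw [if_neg hu, if_neg hu]
  rw [h1, Finset.prod_update_of_mem (Finset.mem_univ v), Finset.sdiff_singleton_eq_erase, h2,
    ← Finset.mul_prod_erase Finset.univ _ (Finset.mem_univ v), if_neg (by omega)]
  ring
lemma lemA (m : ℕ) (v : Fin m) (c : ℂ) (γ : Fin m → ℂ) :
    Hgen m v c * ygen m v 1 * Matrix.diagonal (dd m γ)
      = Matrix.diagonal (dd m (Function.update γ v c)) * (ygen m v 1 * Hgen m v (γ v)) := by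
  unfold Hgen ygen
  rw [Matrix.mul_add, Matrix.mul_one, diag_mul_E, Matrix.add_mul, Matrix.diagonal_mul_diagonal,
    E_mul_diag, Matrix.add_mul, Matrix.one_mul, E_mul_diag, Matrix.mul_add,
    Matrix.diagonal_mul_diagonal, diag_mul_E]
  congr 1
  · exact congrArg Matrix.diagonal (funext fun i => key1 m γ v c i)
  · congr 1
    have hs : (if ((v.succ : Fin (m+1)):ℕ) ≤ (v:ℕ) then c else 1) = 1 := by
      rw [if_neg (by simp [Fin.val_succ])]
    have hcs : (if ((v.castSucc : Fin (m+1)):ℕ) ≤ (v:ℕ) then γ v else 1) = γ v := by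
      rw [if_pos (by simp [Fin.coe_castSucc])]
    rw [hs, hcs, one_mul, one_mul, key2 m γ v c, one_mul]
def Gam {m : ℕ} : {N : ℕ} → (Fin N → Fin m) → (Fin N → ℂ) → (Fin m → ℂ) → (Fin m → ℂ)
  | 0, _, _, γ => γ
  | _+1, w, c, γ => Function.update (Gam (Fin.tail w) (Fin.tail c) γ) (w 0) (c 0)
def Del {m : ℕ} : {N : ℕ} → (Fin N → Fin m) → (Fin N → ℂ) → (Fin m → ℂ) → Fin N → ℂ
  | 0, _, _, _ => finZeroElim
  | _+1, w, c, γ => Fin.cons (Gam (Fin.tail w) (Fin.tail c) γ (w 0)) (Del (Fin.tail w) (Fin.tail c) γ)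
lemma Gam_succ {m N : ℕ} (w : Fin (N+1) → Fin m) (c : Fin (N+1) → ℂ) (γ : Fin m → ℂ) :
    Gam w c γ = Function.update (Gam (fun j => w j.succ) (fun j => c j.succ) γ) (w 0) (c 0) :=
  rfl
lemma Del_zero {m N : ℕ} (w : Fin (N+1) → Fin m) (c : Fin (N+1) → ℂ) (γ : Fin m → ℂ) :
    Del w c γ 0 = Gam (fun j => w j.succ) (fun j => c j.succ) γ (w 0) :=
  rfl
lemma Del_succ {m N : ℕ} (w : Fin (N+1) → Fin m) (c : Fin (N+1) → ℂ) (γ : Fin m → ℂ)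
    (j : Fin N) :
    Del w c γ j.succ = Del (fun j => w j.succ) (fun j => c j.succ) γ j := by
  show Fin.cons _ _ j.succ = _
  rw [Fin.cons_succ]
  rfl
lemma lemB (m : ℕ) : ∀ (N : ℕ) (w : Fin N → Fin m) (c : Fin N → ℂ) (γ : Fin m → ℂ),
    (List.ofFn fun j => Hgen m (w j) (c j) * ygen m (w j) 1).prod * Matrix.diagonal (dd m γ)
      = Matrix.diagonal (dd m (Gam w c γ)) *
        (List.ofFn fun j => ygen m (w j) 1 * Hgen m (w j) (Del w c γ j)).prod := by
  intro N
  induction N with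
  | zero =>
    intro w c γ
    simp only [List.ofFn_zero, List.prod_nil, Matrix.one_mul, Matrix.mul_one]
    rfl
  | succ N ih =>
    intro w c γ
    rw [List.ofFn_succ, List.ofFn_succ, List.prod_cons, List.prod_cons, Matrix.mul_assoc,
      ih (fun j => w j.succ) (fun j => c j.succ) γ, ← Matrix.mul_assoc, ← Matrix.mul_assoc,
      lemA, Gam_succ, Del_zero]
    simp only [Del_succ]
lemma M1 (m : ℕ) (v : Fin m) (t : ℂ) (T : Matrix (Fin (m+1)) (Fin (m+1)) ℂ) :
    xgen m v 1 * (Hgen m v t * (Jmat m * (Hgen m v.rev t * (ygen m v.rev 1 * T))))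
      = t • (Jmat m * T) := by
  calc xgen m v 1 * (Hgen m v t * (Jmat m * (Hgen m v.rev t * (ygen m v.rev 1 * T))))
      = xgen m v 1 * (Hgen m v t * Jmat m * Hgen m v.rev t) * ygen m v.rev 1 * T := by
        simp only [Matrix.mul_assoc]
    _ = xgen m v 1 * (t • Jmat m) * ygen m v.rev 1 * T := by rw [HJH]
    _ = t • (xgen m v 1 * Jmat m * ygen m v.rev 1 * T) := by
        rw [mul_smul_comm, smul_mul_assoc, smul_mul_assoc]
    _ = t • (Jmat m * T) := by rw [XJY]
lemma lemM (m : ℕ) : ∀ (N : ℕ) (s : Fin N → Fin m) (b : Fin N → ℂ),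
    (List.ofFn fun k => xgen m (s k) 1 * Hgen m (s k) (b k)).prod * Jmat m *
      (List.ofFn fun j => Hgen m ((s j.rev).rev) (b j.rev) * ygen m ((s j.rev).rev) 1).prod
    = (∏ k, b k) • Jmat m := by
  intro N
  induction N with
  | zero => intro s b; simp
  | succ N ih =>
    intro s b
    rw [List.ofFn_succ' (f := fun k => xgen m (s k) 1 * Hgen m (s k) (b k)),
      List.ofFn_succ (f := fun j => Hgen m ((s j.rev).rev) (b j.rev) * ygen m ((s j.rev).rev) 1),
      List.prod_concat, List.prod_cons]
    have hrev0 : (0 : Fin (N+1)).rev = Fin.last N := by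
      ext; simp [Fin.val_rev]
    have hrevsucc : ∀ j : Fin N, (j.succ : Fin (N+1)).rev = j.rev.castSucc := fun j =>
      Fin.rev_succ j
    simp only [hrev0, hrevsucc]
    have ih' := ih (fun k => s k.castSucc) (fun k => b k.castSucc)
    simp only [Matrix.mul_assoc] at ih' ⊢
    rw [M1, mul_smul_comm, ih', smul_smul, Fin.prod_univ_castSucc (f := b), mul_comm]
lemma DJD (m : ℕ) (a : Fin m → ℂ) :
    Matrix.diagonal (dd m a) * Jmat m * Matrix.diagonal (dd m (fun u => a u.rev))
      = (∏ u, a u) • Jmat m := by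
  ext i j
  rw [Matrix.mul_diagonal, Matrix.diagonal_mul, Matrix.smul_apply]
  by_cases h : (i:ℕ) + (j:ℕ) = m
  · have hJ : Jmat m i j = (-1:ℂ)^(i:ℕ) := by rw [Jmat, Matrix.of_apply, if_pos h]
    rw [hJ]
    have hrev : dd m (fun u => a u.rev) j = ∏ u : Fin m, if (j:ℕ) ≤ ((u.rev):ℕ) then a u else 1 := by
      unfold dd
      exact (Fintype.prod_equiv Fin.revPerm _ _ (fun u => by simp [Fin.rev_rev])).symm
    have hkey : dd m a i * (∏ u : Fin m, if (j:ℕ) ≤ ((u.rev):ℕ) then a u else 1) = ∏ u, a u := by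
      unfold dd
      rw [← Finset.prod_mul_distrib]
      refine Finset.prod_congr rfl fun u _ => ?_
      have hu := u.isLt; have hi := i.isLt; have hj := j.isLt
      by_cases hc : (i:ℕ) ≤ (u:ℕ)
      · rw [if_pos hc, if_neg (by rw [Fin.val_rev]; omega), mul_one]
      · rw [if_neg hc, if_pos (by rw [Fin.val_rev]; omega), one_mul]
    rw [smul_eq_mul, hrev]
    calc dd m a i * (-1:ℂ)^(i:ℕ) * (∏ u : Fin m, if (j:ℕ) ≤ ((u.rev):ℕ) then a u else 1)
        = dd m a i * (∏ u : Fin m, if (j:ℕ) ≤ ((u.rev):ℕ) then a u else 1) * (-1:ℂ)^(i:ℕ) := by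
          ring
      _ = (∏ u, a u) * (-1:ℂ)^(i:ℕ) := by rw [hkey]
  · have hJ : Jmat m i j = 0 := by rw [Jmat, Matrix.of_apply, if_neg h]
    rw [hJ, smul_eq_mul, mul_zero, zero_mul, mul_zero]
lemma min'_image_succ {N : ℕ} (S : Finset (Fin N)) (h : S.Nonempty) (h' : (S.image Fin.succ).Nonempty) :
    (S.image Fin.succ).min' h' = (S.min' h).succ := by
  apply le_antisymm
  · exact Finset.min'_le _ _ (Finset.mem_image_of_mem _ (S.min'_mem h))
  · refine Finset.le_min' _ _ _ fun x hx => ?_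
    obtain ⟨y, hy, rfl⟩ := Finset.mem_image.1 hx
    exact Fin.succ_le_succ_iff.2 (S.min'_le y hy)
lemma occ_cons_ne {N m : ℕ} (w : Fin (N+1) → Fin m) (u : Fin m) (h : w 0 ≠ u) :
    occ w u = (occ (fun j => w j.succ) u).image Fin.succ := by
  ext j
  simp only [occ, Finset.mem_filter, Finset.mem_univ, true_and, Finset.mem_image]
  constructor
  · intro hj
    refine Fin.cases ?_ (fun j' => ?_) j hj <;> intro hj'
    · exact absurd hj' h
    · exact ⟨j', hj', rfl⟩
  · rintro ⟨y, hy, rfl⟩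
    exact hy
lemma G1 {m : ℕ} : ∀ {N : ℕ} (w : Fin N → Fin m) (c : Fin N → ℂ) (γ : Fin m → ℂ) (u : Fin m),
    Gam w c γ u = if h : (occ w u).Nonempty then c ((occ w u).min' h) else γ u := by
  intro N
  induction N with
  | zero =>
    intro w c γ u
    rw [dif_neg (by simp [occ, Finset.filter_eq_empty_iff])]
    rfl
  | succ N ih =>
    intro w c γ u
    rw [Gam_succ]
    by_cases h0 : w 0 = u
    · subst h0
      rw [Function.update_self]
      have hmem : (0 : Fin (N+1)) ∈ occ w (w 0) := by simp [occ]
      have hne : (occ w (w 0)).Nonempty := ⟨0, hmem⟩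
      rw [dif_pos hne]
      congr 1
      exact le_antisymm (Fin.zero_le _) (Finset.min'_le _ _ hmem)
    · rw [Function.update_of_ne (Ne.symm h0), ih, occ_cons_ne w u h0]
      by_cases hne : (occ (fun j => w j.succ) u).Nonempty
      · rw [dif_pos hne, dif_pos (hne.image _), min'_image_succ _ hne]
      · rw [dif_neg hne, dif_neg (by simpa [Finset.image_nonempty] using hne)]
lemma occ_filter_cons_zero {N m : ℕ} (w : Fin (N+1) → Fin m) :
    (occ w (w 0)).filter (fun j' => (0:Fin (N+1)) < j')
      = (occ (fun j => w j.succ) (w 0)).image Fin.succ := by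
  ext j
  simp only [occ, Finset.mem_filter, Finset.mem_univ, true_and, Finset.mem_image]
  constructor
  · rintro ⟨hj, hpos⟩
    refine Fin.cases ?_ (fun j' => ?_) j hj hpos <;> intro hj' hpos'
    · exact absurd rfl (Fin.pos_iff_ne_zero.mp hpos')
    · exact ⟨j', hj', rfl⟩
  · rintro ⟨y, hy, rfl⟩
    exact ⟨hy, Fin.succ_pos y⟩
lemma occ_filter_cons_succ {N m : ℕ} (w : Fin (N+1) → Fin m) (j : Fin N) :
    (occ w (w j.succ)).filter (fun j' => j.succ < j')
      = ((occ (fun i => w i.succ) (w j.succ)).filter (fun j' => j < j')).image Fin.succ := by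
  ext x
  simp only [occ, Finset.mem_filter, Finset.mem_univ, true_and, Finset.mem_image]
  constructor
  · rintro ⟨hx, hlt⟩
    refine Fin.cases ?_ (fun y => ?_) x hx hlt <;> intro hx' hlt'
    · exact absurd hlt' (by simp [Fin.lt_iff_val_lt_val])
    · exact ⟨y, ⟨hx', Fin.succ_lt_succ_iff.mp hlt'⟩, rfl⟩
  · rintro ⟨y, ⟨hy, hlt⟩, rfl⟩
    exact ⟨hy, Fin.succ_lt_succ_iff.2 hlt⟩
lemma D1 {m : ℕ} : ∀ {N : ℕ} (w : Fin N → Fin m) (c : Fin N → ℂ) (γ : Fin m → ℂ) (j : Fin N),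
    Del w c γ j = if h : ((occ w (w j)).filter (fun j' => j < j')).Nonempty
      then c (((occ w (w j)).filter (fun j' => j < j')).min' h) else γ (w j) := by
  intro N
  induction N with
  | zero => intro w c γ j; exact absurd j.isLt (by omega)
  | succ N ih =>
    intro w c γ j
    refine Fin.cases ?_ (fun j' => ?_) j
    · rw [Del_zero, G1, occ_filter_cons_zero]
      by_cases hne : (occ (fun i => w i.succ) (w 0)).Nonempty
      · rw [dif_pos hne, dif_pos (hne.image _), min'_image_succ _ hne]
      · rw [dif_neg hne, dif_neg (by simpa [Finset.image_nonempty] using hne)]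
    · rw [Del_succ, ih, occ_filter_cons_succ]
      by_cases hne : ((occ (fun i => w i.succ) (w j'.succ)).filter (fun x => j' < x)).Nonempty
      · rw [dif_pos hne, dif_pos (hne.image _), min'_image_succ _ hne]
      · rw [dif_neg hne, dif_neg (by simpa [Finset.image_nonempty] using hne)]
lemma min'_image_rev {N : ℕ} (S : Finset (Fin N)) (h : S.Nonempty)
    (h' : (S.image Fin.rev).Nonempty) :
    (S.image Fin.rev).min' h' = (S.max' h).rev := by
  apply le_antisymm
  · exact Finset.min'_le _ _ (Finset.mem_image_of_mem _ (S.max'_mem h))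
  · refine Finset.le_min' _ _ _ fun x hx => ?_
    obtain ⟨y, hy, rfl⟩ := Finset.mem_image.1 hx
    exact Fin.rev_le_rev.2 (S.le_max' y hy)
lemma occ_sop {N m : ℕ} (s : Fin N → Fin m) (u : Fin m) :
    occ (sop s) u = (occ s u.rev).image Fin.rev := by
  ext j
  simp only [occ, Finset.mem_filter, Finset.mem_univ, true_and, Finset.mem_image]
  simp only [sop]
  constructor
  · intro h
    exact ⟨j.rev, by rw [← h, Fin.rev_rev], Fin.rev_rev j⟩
  · rintro ⟨y, hy, rfl⟩
    rw [Fin.rev_rev, hy, Fin.rev_rev]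
lemma card_filter_le_orderEmb {N : ℕ} (T : Finset (Fin N)) {r : ℕ} (h : T.card = r) (q : Fin r) :
    (T.filter (fun x => T.orderEmbOfFin h q ≤ x)).card = r - (q : ℕ) := by
  have himg : T.filter (fun x => T.orderEmbOfFin h q ≤ x)
      = (Finset.Ici q).image (T.orderEmbOfFin h) := by
    ext x
    simp only [Finset.mem_filter, Finset.mem_image, Finset.mem_Ici]
    constructor
    · rintro ⟨hx, hle⟩
      have : x ∈ Set.range (T.orderEmbOfFin h) := by
        rw [Finset.range_orderEmbOfFin]; exact hx
      obtain ⟨p, rfl⟩ := this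
      exact ⟨p, (T.orderEmbOfFin h).le_iff_le.1 hle, rfl⟩
    · rintro ⟨p, hp, rfl⟩
      exact ⟨Finset.orderEmbOfFin_mem T h p, (T.orderEmbOfFin h).le_iff_le.2 hp⟩
  rw [himg, Finset.card_image_of_injective _ (T.orderEmbOfFin h).injective, Fin.card_Ici]
lemma filter_lt_orderEmb_zero {N : ℕ} (T : Finset (Fin N)) {r : ℕ} (h : T.card = r)
    (q : Fin r) (hq : (q : ℕ) = 0) :
    T.filter (fun x => x < T.orderEmbOfFin h q) = ∅ := by
  rw [Finset.filter_eq_empty_iff]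
  intro x hx
  have : x ∈ Set.range (T.orderEmbOfFin h) := by
    rw [Finset.range_orderEmbOfFin]; exact hx
  obtain ⟨p, rfl⟩ := this
  simp only [not_lt, (T.orderEmbOfFin h).le_iff_le]
  exact Fin.le_def.2 (by omega)
lemma max'_filter_lt_orderEmb {N : ℕ} (T : Finset (Fin N)) {r : ℕ} (h : T.card = r)
    (q : Fin r) (hq : 0 < (q : ℕ)) (hne : (T.filter (fun x => x < T.orderEmbOfFin h q)).Nonempty) :
    (T.filter (fun x => x < T.orderEmbOfFin h q)).max' hne
      = T.orderEmbOfFin h ⟨(q : ℕ) - 1, by omega⟩ := by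
  apply le_antisymm
  · refine Finset.max'_le _ _ _ fun x hx => ?_
    obtain ⟨hx1, hx2⟩ := Finset.mem_filter.1 hx
    have : x ∈ Set.range (T.orderEmbOfFin h) := by
      rw [Finset.range_orderEmbOfFin]; exact hx1
    obtain ⟨p, rfl⟩ := this
    have hpq : p < q := (T.orderEmbOfFin h).lt_iff_lt.1 hx2
    have hpq' : (p:ℕ) < (q:ℕ) := Fin.lt_def.1 hpq
    exact (T.orderEmbOfFin h).le_iff_le.2 (Fin.le_def.2 (show (p:ℕ) ≤ (q:ℕ)-1 by omega))
  · refine Finset.le_max' _ _ (Finset.mem_filter.2 ⟨Finset.orderEmbOfFin_mem T h _, ?_⟩)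
    exact (T.orderEmbOfFin h).lt_iff_lt.2 (Fin.lt_def.2 (show (q:ℕ)-1 < (q:ℕ) by omega))
lemma bridge1 {N m : ℕ} (s : Fin N → Fin m) (a : Fin m → ℂ) (b : Fin N → ℂ) (u : Fin m) :
    Gam (sop s) (fun j => b j.rev) (fun v => a v.rev) u = aPrime s a b u := by
  rw [G1, occ_sop]
  by_cases h : (occ s u.rev).Nonempty
  · rw [dif_pos (h.image _), min'_image_rev _ h, Fin.rev_rev]
    unfold aPrime param
    have hc : 0 < (occ s u.rev).card := Finset.card_pos.2 h
    rw [dif_pos ⟨hc, le_refl _⟩]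
    congr 1
    rw [Finset.coe_orderIsoOfFin_apply, Finset.orderEmbOfFin_last rfl hc]
  · rw [dif_neg (by simpa [Finset.image_nonempty] using h)]
    unfold aPrime param
    rw [dif_neg (by
      rw [Finset.card_eq_zero.2 (Finset.not_nonempty_iff_eq_empty.1 h)]
      omega)]
lemma bridge2 {N m : ℕ} (s : Fin N → Fin m) (a : Fin m → ℂ) (b : Fin N → ℂ) (j : Fin N) :
    Del (sop s) (fun j => b j.rev) (fun v => a v.rev) j = bPrime s a b j := by
  have ht : (sop s j).rev = s j.rev := Fin.rev_rev _
  have hmem : j.rev ∈ occ s (s j.rev) := by simp [occ]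
  have hrange : j.rev ∈ Set.range ((occ s (s j.rev)).orderEmbOfFin rfl) := by
    rw [Finset.range_orderEmbOfFin]; exact hmem
  obtain ⟨q, hq⟩ := hrange
  have hidx : occIdx (sop s) j = (occ s (s j.rev)).card - (q : ℕ) := by
    unfold occIdx
    have himg : (Finset.univ.filter fun j' => j' ≤ j ∧ sop s j' = sop s j)
        = ((occ s (s j.rev)).filter
            (fun x => (occ s (s j.rev)).orderEmbOfFin rfl q ≤ x)).image Fin.rev := by
      ext x
      simp only [Finset.mem_filter, Finset.mem_univ, true_and, Finset.mem_image]
      simp only [sop]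
      constructor
      · rintro ⟨hle, heq⟩
        refine ⟨x.rev, ⟨?_, ?_⟩, Fin.rev_rev x⟩
        · simp only [occ, Finset.mem_filter, Finset.mem_univ, true_and]
          exact Fin.rev_inj.1 heq
        · rw [hq]
          exact Fin.rev_le_rev.2 hle
      · rintro ⟨y, ⟨hy1, hy2⟩, rfl⟩
        rw [hq] at hy2
        have hy1' : s y = s j.rev := by
          simpa [occ] using hy1
        exact ⟨by rw [← Fin.rev_rev j]; exact Fin.rev_le_rev.2 hy2, by
          rw [Fin.rev_rev, hy1']⟩
    rw [himg, Finset.card_image_of_injective _ Fin.rev_injective, card_filter_le_orderEmb]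
  have hqr : (q : ℕ) < (occ s (s j.rev)).card := q.isLt
  have harith : (occ s (sop s j).rev).card - occIdx (sop s) j = (q : ℕ) := by
    rw [ht, hidx]; omega
  unfold bPrime
  rw [harith, ht]
  rw [D1]
  have hoccw : occ (sop s) (sop s j) = (occ s (s j.rev)).image Fin.rev := by
    rw [occ_sop, ht]
  have hfilt : (occ (sop s) (sop s j)).filter (fun x => j < x)
      = ((occ s (s j.rev)).filter
          (fun y => y < (occ s (s j.rev)).orderEmbOfFin rfl q)).image Fin.rev := by
    rw [hoccw]
    ext x
    simp only [Finset.mem_filter, Finset.mem_image]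
    constructor
    · rintro ⟨⟨y, hy, rfl⟩, hlt⟩
      refine ⟨y, ⟨hy, ?_⟩, rfl⟩
      rw [hq]
      rw [← Fin.rev_rev y] at hlt ⊢
      exact Fin.rev_lt_rev.1 (by rwa [Fin.rev_rev])
    · rintro ⟨y, ⟨hy, hlt⟩, rfl⟩
      rw [hq] at hlt
      exact ⟨⟨y, hy, rfl⟩, by rw [← Fin.rev_rev j]; exact Fin.rev_lt_rev.2 hlt⟩
  rw [hfilt]
  by_cases hq0 : 0 < (q : ℕ)
  · have hne : ((occ s (s j.rev)).filter
        (fun y => y < (occ s (s j.rev)).orderEmbOfFin rfl q)).Nonempty := by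
      refine ⟨(occ s (s j.rev)).orderEmbOfFin rfl ⟨(q:ℕ)-1, by omega⟩, Finset.mem_filter.2
        ⟨Finset.orderEmbOfFin_mem _ rfl _, ?_⟩⟩
      exact ((occ s (s j.rev)).orderEmbOfFin rfl).lt_iff_lt.2
        (Fin.lt_def.2 (show (q:ℕ)-1 < (q:ℕ) by omega))
    rw [dif_pos (hne.image _), min'_image_rev _ hne, Fin.rev_rev,
      max'_filter_lt_orderEmb _ rfl q hq0]
    unfold param
    rw [dif_pos ⟨hq0, le_of_lt hqr⟩]
    congr 1
    try rw [Finset.coe_orderIsoOfFin_apply]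
  · have hempty : (occ s (s j.rev)).filter
        (fun y => y < (occ s (s j.rev)).orderEmbOfFin rfl q) = ∅ :=
      filter_lt_orderEmb_zero _ rfl q (by omega)
    rw [hempty]
    rw [dif_neg (by simp)]
    unfold param
    rw [dif_neg (by omega)]
    rw [ht]
lemma central {N m : ℕ} (s : Fin N → Fin m) (a : Fin m → ℂ) (b : Fin N → ℂ) :
    evPlus s a b * Jmat m * evMinus s a b = ((∏ u, a u) * ∏ k, b k) • Jmat m := by
  have hbr1 : (fun u : Fin m => aPrime s a b u)
      = Gam (sop s) (fun j => b j.rev) (fun v => a v.rev) := by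
    funext u; rw [bridge1]
  have hbr2 : ∀ j, bPrime s a b j = Del (sop s) (fun j => b j.rev) (fun v => a v.rev) j :=
    fun j => (bridge2 s a b j).symm
  have hev : evMinus s a b
      = Matrix.diagonal (dd m (Gam (sop s) (fun j => b j.rev) (fun v => a v.rev))) *
        (List.ofFn fun j => ygen m (sop s j) 1 *
          Hgen m (sop s j) (Del (sop s) (fun j => b j.rev) (fun v => a v.rev) j)).prod := by
    unfold evMinus
    simp only [← bridge1 s a b, ← bridge2 s a b]
    rw [Hgen_prod]
  rw [hev, ← lemB m N (sop s) (fun j => b j.rev) (fun v => a v.rev)]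
  have hXHY := lemM m N s b
  have hXHY' : (List.ofFn fun k => xgen m (s k) 1 * Hgen m (s k) (b k)).prod * Jmat m *
      (List.ofFn fun j => Hgen m (sop s j) (b j.rev) * ygen m (sop s j) 1).prod
      = (∏ k, b k) • Jmat m := by
    simpa [sop] using hXHY
  unfold evPlus
  rw [Hgen_prod]
  calc Matrix.diagonal (dd m a) *
        (List.ofFn fun k => xgen m (s k) 1 * Hgen m (s k) (b k)).prod * Jmat m *
        ((List.ofFn fun j => Hgen m (sop s j) (b j.rev) * ygen m (sop s j) 1).prod *
          Matrix.diagonal (dd m fun v => a v.rev))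
      = Matrix.diagonal (dd m a) *
          ((List.ofFn fun k => xgen m (s k) 1 * Hgen m (s k) (b k)).prod * Jmat m *
            (List.ofFn fun j => Hgen m (sop s j) (b j.rev) * ygen m (sop s j) 1).prod) *
          Matrix.diagonal (dd m fun v => a v.rev) := by
        simp only [Matrix.mul_assoc]
    _ = Matrix.diagonal (dd m a) * ((∏ k, b k) • Jmat m) *
          Matrix.diagonal (dd m fun v => a v.rev) := by rw [hXHY']
    _ = (∏ k, b k) • (Matrix.diagonal (dd m a) * Jmat m *
          Matrix.diagonal (dd m fun v => a v.rev)) := by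
        rw [mul_smul_comm, smul_mul_assoc]
    _ = (∏ k, b k) • ((∏ u, a u) • Jmat m) := by rw [DJD]
    _ = ((∏ u, a u) * ∏ k, b k) • Jmat m := by rw [smul_smul, mul_comm]
/-- Inversion–conjugation of evaluation maps (type A):
`J⁻¹·(ev⁺)⁻¹·J = c·ev⁻` with `c = (a_1⋯a_{n−1}·b_1⋯b_N)⁻¹`. -/
theorem evaluation_inversion_conjugation_typeA (m N : ℕ) (hm : 1 ≤ m)
    (s : Fin N → Fin m) (a : Fin m → ℂ) (b : Fin N → ℂ)
    (ha : ∀ u, a u ≠ 0) (hb : ∀ k, b k ≠ 0) :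
    (Jmat m)⁻¹ * (evPlus s a b)⁻¹ * Jmat m
      = ((∏ u, a u) * ∏ k, b k)⁻¹ • evMinus s a b := by
  set c : ℂ := (∏ u, a u) * ∏ k, b k with hc
  have hc0 : c ≠ 0 := mul_ne_zero (Finset.prod_ne_zero_iff.2 fun u _ => ha u)
    (Finset.prod_ne_zero_iff.2 fun k _ => hb k)
  have hJJ' : Jmat m * ((-1:ℂ)^m • Jmat m) = 1 := by
    rw [mul_smul_comm, JJ, smul_smul, ← pow_add, Even.neg_one_pow ⟨m, rfl⟩, one_smul]
  have hJJ'' : ((-1:ℂ)^m • Jmat m) * Jmat m = 1 := by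
    rw [smul_mul_assoc, JJ, smul_smul, ← pow_add, Even.neg_one_pow ⟨m, rfl⟩, one_smul]
  have hJinv : (Jmat m)⁻¹ = (-1:ℂ)^m • Jmat m := Matrix.inv_eq_right_inv hJJ'
  have hright : evPlus s a b *
      (c⁻¹ • (Jmat m * (evMinus s a b * ((-1:ℂ)^m • Jmat m)))) = 1 := by
    rw [mul_smul_comm]
    have : evPlus s a b * (Jmat m * (evMinus s a b * ((-1:ℂ)^m • Jmat m)))
        = (evPlus s a b * Jmat m * evMinus s a b) * ((-1:ℂ)^m • Jmat m) := by
      simp only [Matrix.mul_assoc]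
    rw [this, central, smul_mul_assoc, hJJ', smul_smul, inv_mul_cancel₀ hc0, one_smul]
  have hinv : (evPlus s a b)⁻¹
      = c⁻¹ • (Jmat m * (evMinus s a b * ((-1:ℂ)^m • Jmat m))) :=
    Matrix.inv_eq_right_inv hright
  rw [hinv, hJinv]
  calc ((-1:ℂ)^m • Jmat m) *
        (c⁻¹ • (Jmat m * (evMinus s a b * ((-1:ℂ)^m • Jmat m)))) * Jmat m
      = c⁻¹ • ((((-1:ℂ)^m • Jmat m) * Jmat m) * (evMinus s a b *
          ((((-1:ℂ)^m • Jmat m)) * Jmat m))) := by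
        rw [mul_smul_comm, smul_mul_assoc]
        congr 1
        simp only [Matrix.mul_assoc]
    _ = c⁻¹ • evMinus s a b := by rw [hJJ'', Matrix.one_mul, Matrix.mul_one]
end
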